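/- arXiv:2406.19248 — 2 statements merged into one kernel-verified Lean document; each statement's English description precedes it below -/
import Mathlib

section
/- For all integers L ≥ 1 and N ≥ 1, the average distortion of N staggered L-level uniform quantizers on the unit circle equals the closed form: (L/(2π)) · (LN/(2π)) · ∫_{-π/L}^{π/L} ( ∫_{-π/(NL)}^{π/(NL)} 2(1 - cos(θ - α)) dα ) dθ = 2 - 2 · (sin(π/(LN)) / (π/(LN))) · (sin(π/L) / (π/L)). -/
open Real

lemma inner_int (b θ : ℝ) :
    ∫ α in (-b)..b, 2 * (1 - Real.cos (θ - α)) = 4 * b - 4 * Real.cos θ * Real.sin b := by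
  have h1 : ∫ α in (-b)..b, Real.cos (θ - α) = 2 * Real.cos θ * Real.sin b := by
    rw [intervalIntegral.integral_comp_sub_left (fun x => Real.cos x) θ,
      integral_cos]
    simp only [Real.sin_sub, Real.sin_add, Real.sin_neg, Real.cos_neg, sub_neg_eq_add]
    ring
  have h2 : (∫ α in (-b)..b, 2 * (1 - Real.cos (θ - α)))
      = ∫ α in (-b)..b, (2 - 2 * Real.cos (θ - α)) := by
    congr 1; ext α; ring
  rw [h2, intervalIntegral.integral_sub intervalIntegrable_const]
  · rw [intervalIntegral.integral_const_mul, h1, intervalIntegral.integral_const]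
    simp
    ring
  · exact (Continuous.intervalIntegrable (by continuity) _ _)

lemma outer_int (a b : ℝ) :
    ∫ θ in (-a)..a, (4 * b - 4 * Real.cos θ * Real.sin b)
      = 8 * a * b - 8 * Real.sin a * Real.sin b := by
  rw [intervalIntegral.integral_sub intervalIntegrable_const
    (Continuous.intervalIntegrable (by continuity) _ _)]
  have : (∫ θ in (-a)..a, 4 * Real.cos θ * Real.sin b)
      = (4 * Real.sin b) * ∫ θ in (-a)..a, Real.cos θ := by
    rw [← intervalIntegral.integral_const_mul]
    congr 1; ext θ; ring
  rw [this, integral_cos, intervalIntegral.integral_const]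
  simp
  ring

/-- Theorem 1 (computation): the average distortion of `N` staggered `L`-level uniform
quantizers on the unit circle (expressed as the displayed double integral) equals
`2 - 2 · (sin(π/(LN))/(π/(LN))) · (sin(π/L)/(π/L))`. -/
theorem staggered_quantizer_distortion (L N : ℕ) (hL : 1 ≤ L) (hN : 1 ≤ N) :
    ((L : ℝ) / (2 * π)) * (((L : ℝ) * N) / (2 * π)) *
      ∫ θ in (-(π / L))..(π / L),
        ∫ α in (-(π / (N * L)))..(π / (N * L)), 2 * (1 - Real.cos (θ - α))
    = 2 - 2 * (Real.sin (π / (L * N)) / (π / (L * N))) * (Real.sin (π / L) / (π / L)) := by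
  have hL0 : (L : ℝ) ≠ 0 := Nat.cast_ne_zero.mpr (by omega)
  have hN0 : (N : ℝ) ≠ 0 := Nat.cast_ne_zero.mpr (by omega)
  have hπ : (π : ℝ) ≠ 0 := Real.pi_ne_zero
  simp only [inner_int, outer_int]
  have hNL : π / (↑N * ↑L) = π / (↑L * ↑N) := by rw [mul_comm]
  rw [hNL]
  field_simp
  ring
end

section
/- Let L ≥ 1 and N ≥ 1 be integers. Let θ be uniformly distributed on the circle ℝ/(2πℤ), let U be uniform on {0, 1, …, N-1} independent of θ, and let V be uniform on the interval [-π/(NL), π/(NL)) independent of (θ, U). Define the reconstruction angle θ̂ = (2π/L)·( round(θ·L/(2π) - U/N) + U/N ) + V, taken modulo 2π, where round(·) rounds to the nearest integer. Then θ̂ is uniformly distributed on ℝ/(2πℤ); i.e., the staggered quantization procedure achieves perfect perceptual quality for the uniform source on the circle. -/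
open MeasureTheory ProbabilityTheory Real

instance : Fact ((0 : ℝ) < 2 * π) := ⟨by positivity⟩

/-- The uniform (normalized Haar) probability measure on the circle `ℝ/(2πℤ)`. -/
noncomputable def circleUniform : Measure (AddCircle (2 * π)) :=
  (volume (Set.univ : Set (AddCircle (2 * π))))⁻¹ • volume

/-! For a fixed offset `s`, the quantizer is constant on each of its `L` cells, so it pushes the
uniform `θ` to the uniform law on its `L` reconstruction points `(2π/L)(k + s)`. Averaging over
the offsets `s = n/N` interleaves these point sets into the fine grid `(2π/(NL))ℤ`, on which the
quantized angle is therefore uniform. The dither `V` is independent of it and uniform on one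
fine cell, so the law of `θ̂` is the convolution of the two, and the translated cells tile the
circle. -/

open Set
open scoped ENNReal

/-- The uniform quantizer of stepsize `w`, staggered by the fraction `s` of a step. -/
noncomputable def staggeredQuantizer (w s x : ℝ) : ℝ := w * (round (x / w - s) + s)

lemma measurable_staggeredQuantizer (w s : ℝ) : Measurable (staggeredQuantizer w s) := by
  have : Measurable (round : ℝ → ℤ) := by
    rw [show (round : ℝ → ℤ) = fun x => ⌊x + 1 / 2⌋ from funext round_eq]
    fun_prop
  unfold staggeredQuantizer
  fun_prop

lemma staggeredQuantizer_add_intCast_mul {w : ℝ} (hw : w ≠ 0) (s x : ℝ) (m : ℤ) :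
    staggeredQuantizer w s (x + m * w) = staggeredQuantizer w s x + m * w := by
  have : (x + m * w) / w - s = x / w - s + m := by field_simp; ring
  rw [staggeredQuantizer, staggeredQuantizer, this, round_add_intCast]
  push_cast
  ring

lemma staggeredQuantizer_div_eq (T L s x : ℝ) :
    staggeredQuantizer (T / L) s x = T / L * (round (x * L / T - s) + s) := by
  rw [staggeredQuantizer, div_div_eq_mul_div]

lemma staggeredQuantizer_eq_of_mem_Ico {w : ℝ} (hw : 0 < w) (s x : ℝ) (k : ℤ)
    (hx : x ∈ Ico (w * (s - 1 / 2) + k * w) (w * (s - 1 / 2) + (k + 1) * w)) :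
    staggeredQuantizer w s x = w * (k + s) := by
  have hk : round (x / w - s) = k := by
    rw [round_eq, Int.floor_eq_iff]
    constructor
    · have := (le_div_iff₀ hw).2 (show (k + s - 1 / 2) * w ≤ x by linarith [hx.1])
      linarith
    · have := (div_lt_iff₀ hw).2 (show x < (k + s + 1 / 2) * w by linarith [hx.2])
      linarith
  rw [staggeredQuantizer, hk]

namespace MeasureTheory.Measure

lemma map_restrict_eq_smul_dirac {α β : Type*} [MeasurableSpace α] [MeasurableSpace β]
    {μ : Measure α} {s : Set α} (hs : MeasurableSet s) {f : α → β} {c : β}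
    (hf : ∀ x ∈ s, f x = c) : (μ.restrict s).map f = μ s • dirac c := by
  rw [map_congr ((ae_restrict_iff' hs).2 (Filter.Eventually.of_forall hf)),
    map_const, restrict_apply_univ]

lemma sum_restrict_Ico_eq_restrict_Ico (μ : Measure ℝ) (a : ℝ) {w : ℝ} (hw : 0 ≤ w)
    (m : ℕ) :
    ∑ j ∈ Finset.range m, μ.restrict (Ico (a + j * w) (a + (j + 1) * w))
      = μ.restrict (Ico a (a + m * w)) := by
  induction m with
  | zero => simp
  | succ m ih =>
    rw [Finset.sum_range_succ, ih, Nat.cast_succ, ← restrict_union Ico_disjoint_Ico_same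
      measurableSet_Ico, Ico_union_Ico_eq_Ico (by nlinarith) (by nlinarith)]

lemma map_add_left_volume_restrict_Ico (c a b : ℝ) :
    (volume.restrict (Ico a b)).map (c + ·) = volume.restrict (Ico (c + a) (c + b)) := by
  have h := (measurePreserving_add_left volume c).restrict_preimage
    (measurableSet_Ico (a := c + a) (b := c + b))
  rw [preimage_const_add_Ico, add_sub_cancel_left, add_sub_cancel_left] at h
  exact h.map_eq

lemma finset_sum_conv {M ι : Type*} [AddMonoid M] [MeasurableSpace M] [MeasurableAdd₂ M]
    (s : Finset ι) (μ : ι → Measure M) (ν : Measure M) [SFinite ν] :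
    (∑ i ∈ s, μ i) ∗ ν = ∑ i ∈ s, μ i ∗ ν := by
  rw [conv, ← sum_coe_finset, prod_sum_left,
    map_sum measurable_add.aemeasurable]
  exact sum_coe_finset s fun i => μ i ∗ ν

end MeasureTheory.Measure

namespace AddCircle

lemma sum_sum_dirac_eq_sum_dirac_fine_grid {T : ℝ} (L N : ℕ) :
    ∑ n : Fin N, ∑ k : Fin L, Measure.dirac ((T / L * (k + (n : ℕ) / N) : ℝ) : AddCircle T)
      = ∑ j : Fin (L * N), Measure.dirac ((j * (T / (L * N : ℕ)) : ℝ) : AddCircle T) := by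
  rw [Finset.sum_comm, ← Fintype.sum_prod_type', ← finProdFinEquiv.sum_comp]
  refine Fintype.sum_congr _ _ fun p => ?_
  have hL : (L : ℝ) ≠ 0 := Nat.cast_ne_zero.2 p.1.pos.ne'
  have hN : (N : ℝ) ≠ 0 := Nat.cast_ne_zero.2 p.2.pos.ne'
  congr 2
  rw [finProdFinEquiv_apply_val]
  push_cast
  field_simp
  ring

variable {T : ℝ} [Fact (0 < T)]

lemma exists_equivIco_coe_eq_add_intCast_mul (a x : ℝ) :
    ∃ m : ℤ, (equivIco T a x : ℝ) = x + m * T := by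
  obtain ⟨m, hm⟩ := (coe_eq_zero_iff (p := T)).1
    (by rw [coe_sub, coe_equivIco, sub_self] : ((equivIco T a x - x : ℝ) : AddCircle T) = 0)
  exact ⟨m, by rw [← zsmul_eq_mul, hm]; ring⟩

lemma map_coe_volume_restrict_Ico (b : ℝ) :
    (volume.restrict (Ico b (b + T))).map ((↑) : ℝ → AddCircle T) = volume := by
  rw [Measure.restrict_congr_set Ico_ae_eq_Ioc]
  exact (AddCircle.measurePreserving_mk T b).map_eq

lemma measurable_coe_staggeredQuantizer_equivIco (w s a : ℝ) :
    Measurable fun t : AddCircle T => (staggeredQuantizer w s (equivIco T a t) : AddCircle T) :=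
  AddCircle.measurable_mk'.comp ((measurable_staggeredQuantizer w s).comp
    (measurable_subtype_coe.comp (measurableEquivIco T a).measurable))

lemma measurable_coe_staggeredQuantizer_fin (w : ℝ) (N : ℕ) (a : ℝ) :
    Measurable fun p : AddCircle T × Fin N =>
      (staggeredQuantizer w ((p.2 : ℕ) / N) (equivIco T a p.1) : AddCircle T) :=
  measurable_from_prod_countable_left fun n =>
    measurable_coe_staggeredQuantizer_equivIco w ((n : ℕ) / N) a

lemma coe_staggeredQuantizer_equivIco_coe {L : ℕ} (hL : 0 < L) (s a x : ℝ) :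
    (staggeredQuantizer (T / L) s (equivIco T a x) : AddCircle T)
      = staggeredQuantizer (T / L) s x := by
  have hT0 : 0 < T := Fact.out
  obtain ⟨m, hm⟩ := exists_equivIco_coe_eq_add_intCast_mul (T := T) a x
  have hT : (m : ℝ) * T = ((m * L : ℤ) : ℝ) * (T / L) := by
    push_cast
    field_simp
  rw [hm, hT, staggeredQuantizer_add_intCast_mul (by positivity), coe_add, ← hT, ← zsmul_eq_mul,
    coe_zsmul, coe_period, smul_zero, add_zero]

lemma map_staggeredQuantizer_volume {L : ℕ} (hL : 0 < L) (s a : ℝ) :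
    (volume : Measure (AddCircle T)).map
        (fun t => (staggeredQuantizer (T / L) s (equivIco T a t) : AddCircle T))
      = ∑ k : Fin L,
          ENNReal.ofReal (T / L) • Measure.dirac ((T / L * (k + s) : ℝ) : AddCircle T) := by
  have hT0 : 0 < T := Fact.out
  set w := T / L
  have hw : 0 < w := by positivity
  have hq := measurable_coe_staggeredQuantizer_equivIco (T := T) w s a
  set b := w * (s - 1 / 2)
  have hT : b + T = b + L * w := by simp only [w]; field_simp
  rw [← map_coe_volume_restrict_Ico (T := T) b, Measure.map_map hq AddCircle.measurable_mk', hT,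
    ← Measure.sum_restrict_Ico_eq_restrict_Ico _ _ hw.le,
    Measure.map_finset_sum (hq.comp AddCircle.measurable_mk').aemeasurable,
    ← Fin.sum_univ_eq_sum_range]
  refine Finset.sum_congr rfl fun k _ => ?_
  rw [Measure.map_restrict_eq_smul_dirac measurableSet_Ico
      (c := ((w * (k + s) : ℝ) : AddCircle T)),
    Real.volume_Ico, show b + (k + 1) * w - (b + k * w) = w by ring]
  intro x hx
  have := staggeredQuantizer_eq_of_mem_Ico hw s x k (by exact_mod_cast hx)
  refine (coe_staggeredQuantizer_equivIco_coe hL s a x).trans ?_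
  rw [this, Int.cast_natCast]

lemma map_staggeredQuantizer_uniform {L : ℕ} (hL : 0 < L) (s a : ℝ) :
    ((volume (univ : Set (AddCircle T)))⁻¹ • volume).map
        (fun t => (staggeredQuantizer (T / L) s (equivIco T a t) : AddCircle T))
      = (L : ℝ≥0∞)⁻¹ •
          ∑ k : Fin L, Measure.dirac ((T / L * (k + s) : ℝ) : AddCircle T) := by
  have hT0 : 0 < T := Fact.out
  rw [Measure.map_smul, map_staggeredQuantizer_volume hL, ← Finset.smul_sum, smul_smul,
    AddCircle.measure_univ, ENNReal.ofReal_div_of_pos (by positivity), ENNReal.ofReal_natCast,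
    div_eq_mul_inv, ENNReal.inv_mul_cancel_left (by simpa using hT0) ENNReal.ofReal_ne_top]

lemma sum_dirac_conv_map_coe_volume_restrict_Ico {M : ℕ} (hM : 0 < M) (b : ℝ) :
    (∑ j : Fin M, Measure.dirac ((j * (T / M) : ℝ) : AddCircle T)) ∗
        (volume.restrict (Ico b (b + T / M))).map ((↑) : ℝ → AddCircle T) = volume := by
  have hT0 : 0 < T := Fact.out
  have hshift (j : ℕ) : Measure.dirac ((j * (T / M) : ℝ) : AddCircle T) ∗
      (volume.restrict (Ico b (b + T / M))).map ((↑) : ℝ → AddCircle T)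
        = (volume.restrict (Ico (b + j * (T / M)) (b + (j + 1) * (T / M)))).map
            ((↑) : ℝ → AddCircle T) := by
    rw [Measure.dirac_conv, Measure.map_map (measurable_const_add _) AddCircle.measurable_mk',
      show ((_ : AddCircle T) + ·) ∘ ((↑) : ℝ → AddCircle T) = (↑) ∘ (j * (T / M) + ·)
        from funext fun x => (coe_add (p := T) _ x).symm,
      ← Measure.map_map AddCircle.measurable_mk' (measurable_const_add _),
      Measure.map_add_left_volume_restrict_Ico]
    congr 3 <;> ring
  simp_rw [Measure.finset_sum_conv, hshift]
  rw [← Measure.map_finset_sum AddCircle.measurable_mk'.aemeasurable,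
    Fin.sum_univ_eq_sum_range
      (fun j => volume.restrict (Ico (b + j * (T / M)) (b + (j + 1) * (T / M)))),
    Measure.sum_restrict_Ico_eq_restrict_Ico _ _ (by positivity),
    mul_div_cancel₀ _ (by positivity),
    map_coe_volume_restrict_Ico]

lemma map_staggeredQuantizer_eq_uniform_fine_grid {Ω : Type*} [MeasurableSpace Ω]
    {μ : Measure Ω} [IsFiniteMeasure μ] {L N : ℕ} (hL : 0 < L) (a : ℝ)
    {θ : Ω → AddCircle T} {U : Ω → Fin N} (hθm : Measurable θ) (hUm : Measurable U)
    (hθ : μ.map θ = (volume (univ : Set (AddCircle T)))⁻¹ • volume)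
    (hU : ∀ n, μ (U ⁻¹' {n}) = (N : ℝ≥0∞)⁻¹) (hθU : IndepFun θ U μ) :
    μ.map (fun ω =>
        (staggeredQuantizer (T / L) ((U ω : ℕ) / N) (equivIco T a (θ ω)) : AddCircle T))
      = ((L * N : ℕ) : ℝ≥0∞)⁻¹ •
          ∑ j : Fin (L * N), Measure.dirac ((j * (T / (L * N : ℕ)) : ℝ) : AddCircle T) := by
  set q : AddCircle T × Fin N → AddCircle T :=
    fun p => (staggeredQuantizer (T / L) ((p.2 : ℕ) / N) (equivIco T a p.1) : AddCircle T)
  have hq : Measurable q := measurable_coe_staggeredQuantizer_fin (T / L) N a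
  have hlawU : μ.map U = Measure.sum fun n => (N : ℝ≥0∞)⁻¹ • Measure.dirac n := by
    conv_lhs => rw [← Measure.sum_smul_dirac (μ.map U)]
    simp_rw [Measure.map_apply hUm (measurableSet_singleton _), hU]
  have hterm (n : Fin N) : ((μ.map θ).prod ((N : ℝ≥0∞)⁻¹ • Measure.dirac n)).map q
      = ((L * N : ℕ) : ℝ≥0∞)⁻¹ •
          ∑ k : Fin L, Measure.dirac ((T / L * (k + (n : ℕ) / N) : ℝ) : AddCircle T) := by
    rw [Measure.prod_smul_right, Measure.map_smul, Measure.prod_dirac,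
      Measure.map_map hq measurable_prodMk_right, hθ, Function.comp_def]
    simp only [q]
    rw [map_staggeredQuantizer_uniform hL, smul_smul, Nat.cast_mul, mul_comm,
      ENNReal.mul_inv (by simp) (by simp)]
  calc _ = (μ.map fun ω => (θ ω, U ω)).map q := (Measure.map_map hq (hθm.prodMk hUm)).symm
    _ = ∑ n : Fin N, ((μ.map θ).prod ((N : ℝ≥0∞)⁻¹ • Measure.dirac n)).map q := by
      rw [(indepFun_iff_map_prod_eq_prod_map_map hθm.aemeasurable hUm.aemeasurable).1 hθU, hlawU,
        Measure.prod_sum_right, Measure.map_sum hq.aemeasurable, Measure.sum_fintype]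
    _ = _ := by
      simp_rw [hterm, ← Finset.smul_sum, sum_sum_dirac_eq_sum_dirac_fine_grid]

lemma map_add_coe_eq_uniform_of_fine_grid {Ω : Type*} [MeasurableSpace Ω] {μ : Measure Ω}
    [IsFiniteMeasure μ] {M : ℕ} (hM : 0 < M) (b : ℝ) {D : Ω → AddCircle T} {V : Ω → ℝ}
    (hDm : Measurable D) (hVm : Measurable V)
    (hD : μ.map D =
      (M : ℝ≥0∞)⁻¹ • ∑ j : Fin M, Measure.dirac ((j * (T / M) : ℝ) : AddCircle T))
    (hV : μ.map V = (volume (Ico b (b + T / M)))⁻¹ • volume.restrict (Ico b (b + T / M)))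
    (hDV : IndepFun D V μ) :
    μ.map (fun ω => D ω + V ω) = (volume (univ : Set (AddCircle T)))⁻¹ • volume := by
  have hT0 : 0 < T := Fact.out
  have hVm' : Measurable fun ω => (V ω : AddCircle T) := AddCircle.measurable_mk'.comp hVm
  have hVlaw : μ.map (fun ω => (V ω : AddCircle T))
      = (volume (Ico b (b + T / M)))⁻¹ • (volume.restrict (Ico b (b + T / M))).map (↑) := by
    rw [← Measure.map_smul, ← hV]
    exact (Measure.map_map AddCircle.measurable_mk' hVm).symm
  rw [show (fun ω => D ω + V ω) = D + fun ω => (V ω : AddCircle T) from rfl,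
    (hDV.comp measurable_id AddCircle.measurable_mk').map_add_eq_map_conv_map hDm hVm', hD, hVlaw,
    Measure.conv_smul_left, Measure.conv_smul_right, sum_dirac_conv_map_coe_volume_restrict_Ico hM,
    smul_smul, Real.volume_Ico, add_sub_cancel_left, AddCircle.measure_univ,
    ENNReal.ofReal_div_of_pos (by positivity), ENNReal.ofReal_natCast,
    ENNReal.inv_div (Or.inl (ENNReal.natCast_ne_top M)) (Or.inl (by simpa using hM.ne')),
    div_eq_mul_inv, ENNReal.inv_mul_cancel_left (by simpa using hM.ne') (ENNReal.natCast_ne_top M)]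

end AddCircle

/-- Theorem 1 (perfect perceptual quality): for `θ` uniform on the circle `ℝ/(2πℤ)`,
`U` uniform on `{0, …, N-1}` independent of `θ`, and `V` uniform on
`[-π/(NL), π/(NL))` independent of `(θ, U)`, the staggered-quantizer reconstruction
`θ̂ = (2π/L)(round(θ·L/(2π) - U/N) + U/N) + V  (mod 2π)` is uniform on `ℝ/(2πℤ)`.
Here `θ` is represented by its canonical representative in `[0, 2π)`. -/
theorem staggered_quantizer_perfect_perception
    (L N : ℕ) (hL : 1 ≤ L) (hN : 1 ≤ N)
    {Ω : Type*} [MeasurableSpace Ω] (μ : Measure Ω) [IsProbabilityMeasure μ]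
    (θ : Ω → AddCircle (2 * π)) (U : Ω → Fin N) (V : Ω → ℝ)
    (hθm : Measurable θ) (hUm : Measurable U) (hVm : Measurable V)
    (hθ : Measure.map θ μ = circleUniform)
    (hU : ∀ n : Fin N, μ (U ⁻¹' {n}) = (N : ENNReal)⁻¹)
    (hV : Measure.map V μ =
      (volume (Set.Ico (-(π / (N * L))) (π / (N * L))))⁻¹ •
        volume.restrict (Set.Ico (-(π / (N * L))) (π / (N * L))))
    (hθU : IndepFun θ U μ)
    (hVindep : IndepFun (fun ω => (θ ω, U ω)) V μ) :
    Measure.map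
      (fun ω =>
        (((2 * π / L) *
              ((round ((AddCircle.equivIco (2 * π) 0 (θ ω) : ℝ) * L / (2 * π)
                  - ((U ω : ℕ) : ℝ) / N) : ℝ) + ((U ω : ℕ) : ℝ) / N)
            + V ω : ℝ) : AddCircle (2 * π))) μ
      = circleUniform := by
  have hq := AddCircle.measurable_coe_staggeredQuantizer_fin (T := 2 * π) (2 * π / L) N 0
  have hIco : Ico (-(π / (N * L))) (π / (N * L))
      = Ico (-(π / (N * L))) (-(π / (N * L)) + 2 * π / (L * N : ℕ)) := by
    congr 1
    push_cast
    field_simp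
    ring
  simp_rw [AddCircle.coe_add, ← staggeredQuantizer_div_eq]
  exact AddCircle.map_add_coe_eq_uniform_of_fine_grid (Nat.mul_pos hL hN) _
    (hq.comp (f := fun ω => (θ ω, U ω)) (hθm.prodMk hUm)) hVm
    (AddCircle.map_staggeredQuantizer_eq_uniform_fine_grid hL 0 hθm hUm hθ hU hθU) (hIco ▸ hV)
    (hVindep.comp hq measurable_id)
end
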